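/- Let d be an odd prime and γ = exp(2πi/d). The d−1 unitary bases B_k = {Z_t^{(k)} : t = 0,…,d−1} with Z_t^{(k)} = (1/√d) Σ_{h=0}^{d−1} γ^{t(d−h)} γ^{−k α_h} Z^h (k = 1,…,d−1), together with B_0 = {I, Z, …, Z^{d−1}}, form d bases of the d-dimensional subspace span{Z^0,…,Z^{d−1}} of M(d,ℂ) that are pairwise mutually unbiased: for any two distinct bases, |Tr(A†B)| is a nonzero constant for all elements A, B from the two bases. -/

import Mathlib

open Matrix Complex

noncomputable def omega (d : ℕ) : ℂ := Complex.exp (2 * Real.pi * Complex.I / d)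

noncomputable def Zmat (d : ℕ) : Matrix (Fin d) (Fin d) ℂ :=
  Matrix.diagonal (fun j : Fin d => omega d ^ (j : ℕ))

/-- `α_h = h + (h+1) + … + (d−1)`. -/
def alphaSum (d h : ℕ) : ℕ := ∑ j ∈ Finset.Ico h d, j

/-- The `t`-th element of the `k`-th basis: `B_0 = {Z^t}` and, for `k ≠ 0`,
`Z_t^{(k)} = (1/√d) Σ_{h=0}^{d−1} γ^{t(d−h)} γ^{−k α_h} Z^h`. -/
noncomputable def basOp (d k t : ℕ) : Matrix (Fin d) (Fin d) ℂ :=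
  if k = 0 then Zmat d ^ t
  else ∑ h ∈ Finset.range d,
    ((1 / (Real.sqrt d : ℂ)) * omega d ^ (t * (d - h)) * (omega d ^ (k * alphaSum d h))⁻¹)
      • Zmat d ^ h


/-!
Write `ψ` for the standard additive character of `ZMod d`, so that `γ ^ n = ψ n`. Every
`Z_t^{(k)}` is a combination of the diagonal matrices `Z^h`, `h < d`, which are orthogonal for
`(A, B) ↦ Tr(A†B)` with `Tr((Z^h)†Z^h) = d`; for `k ≠ 0` the coefficient of `Z^h` is
`d^{-1/2} ψ(-(t h + k α_h))`. Since `2 α_h ≡ h - h²` modulo `d`, the trace form of `Z_t^{(k)}`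
and `Z_{t'}^{(k')}` (`k, k' ≠ 0`) is the character sum `∑ₓ ψ(a x² + b x)` with
`a = (k' - k) / 2`, `b = t - t' - a`. For `k = k'` it is linear and vanishes unless `t = t'`;
for `k ≠ k'` it is a quadratic Gauss sum, of squared modulus `d`. Against `Z^t` the trace form
is `d` times the coefficient of `Z^t`, again of squared modulus `d`. The diagonal entries of
`Z_t^{(k)}` are `d^{-1/2}` times such Gauss sums, hence unimodular.
-/

open Finset ZMod ComplexConjugate

section QuadraticGaussSum

variable {F : Type*} [Field F] [Fintype F] [DecidableEq F] {ψ : AddChar F ℂ}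

theorem AddChar.norm_sq_sum_quadratic (hψ : ψ.IsPrimitive) {a : F} (ha : 2 * a ≠ 0) (b : F) :
    ‖∑ x, ψ (a * x ^ 2 + b * x)‖ ^ 2 = Fintype.card F := by
  set q : F → F := fun x ↦ a * x ^ 2 + b * x
  -- substituting `x = y + m`, the sum over `y` is `∑ y, ψ (y * (2 * a * m))`, zero unless `m = 0`
  have hshift (y m : F) : q (y + m) - q y = y * (2 * a * m) + q m := by ring
  have hsum : ((‖∑ x, ψ (q x)‖ ^ 2 : ℝ) : ℂ) = Fintype.card F :=
    calc ((‖∑ x, ψ (q x)‖ ^ 2 : ℝ) : ℂ)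
        = ∑ y, ∑ x, ψ (q x) * conj (ψ (q y)) := by
          rw [Complex.ofReal_pow, ← Complex.mul_conj', map_sum, sum_mul_sum, sum_comm]
      _ = ∑ y, ∑ m, ψ (q (y + m) - q y) := by
          refine sum_congr rfl fun y _ ↦ ?_
          rw [← Equiv.sum_comp (Equiv.addLeft y)]
          simp only [Equiv.coe_addLeft, sub_eq_add_neg, AddChar.map_add_eq_mul,
            AddChar.map_neg_eq_conj]
      _ = ∑ m, ψ (q m) * ∑ y, ψ (y * (2 * a * m)) := by
          simp only [hshift, AddChar.map_add_eq_mul, mul_sum]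
          rw [sum_comm]
          simp only [mul_comm]
      _ = Fintype.card F := by
          simp only [AddChar.sum_mulShift _ hψ, mul_eq_zero, ha, false_or]
          simp [q]
  exact_mod_cast hsum

end QuadraticGaussSum

lemma Matrix.diagonal_mem_unitaryGroup {n 𝕜 : Type*} [Fintype n] [DecidableEq n] [RCLike 𝕜]
    {v : n → 𝕜} (hv : ∀ i, ‖v i‖ = 1) : diagonal v ∈ unitaryGroup n 𝕜 := by
  rw [mem_unitaryGroup_iff', star_eq_conjTranspose, diagonal_conjTranspose, diagonal_mul_diagonal,
    ← diagonal_one]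
  congr with i
  simp [RCLike.conj_mul, hv]

lemma Matrix.norm_trace_conjTranspose_mul_comm {n 𝕜 : Type*} [Fintype n] [RCLike 𝕜]
    (A B : Matrix n n 𝕜) : ‖trace (Aᴴ * B)‖ = ‖trace (Bᴴ * A)‖ := by
  rw [← norm_star, ← trace_conjTranspose, conjTranspose_mul, conjTranspose_conjTranspose]

lemma alphaSum_mul_two_add {d h : ℕ} (hh : h ≤ d) :
    alphaSum d h * 2 + h * h = d * (d - 1) + h := by
  have hsplit := sum_range_add_sum_Ico (fun j ↦ j) hh
  have hsum_h := sum_range_id_mul_two h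
  have hsum_d := sum_range_id_mul_two d
  have hsq : h * h = h * (h - 1) + h := by cases h <;> simp [Nat.mul_succ]
  rw [alphaSum]
  linarith

section PowersOfZ

variable {d : ℕ}

lemma natCast_inj_of_lt {m n : ℕ} (hm : m < d) (hn : n < d) :
    (m : ZMod d) = n ↔ m = n :=
  ⟨fun h ↦ by rw [← val_cast_of_lt hm, h, val_cast_of_lt hn], congrArg _⟩

lemma natCast_alphaSum_mul_two {h : ℕ} (hh : h ≤ d) :
    (alphaSum d h : ZMod d) * 2 = h - h ^ 2 := by
  have := congrArg (Nat.cast : ℕ → ZMod d) (alphaSum_mul_two_add hh)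
  push_cast [ZMod.natCast_self] at this
  linear_combination this

variable [NeZero d]

lemma sum_range_eq_sum_zmod {M : Type*} [AddCommMonoid M] (f : ZMod d → M) :
    ∑ h ∈ range d, f h = ∑ x, f x :=
  sum_nbij' (↑) (fun x ↦ x.val) (fun _ _ ↦ mem_univ _)
    (fun x _ ↦ mem_range.mpr x.val_lt) (fun _ hh ↦ val_cast_of_lt (mem_range.mp hh))
    (fun x _ ↦ natCast_zmod_val x) (fun _ _ ↦ rfl)

lemma omega_pow (n : ℕ) : omega d ^ n = stdAddChar (n : ZMod d) := by
  have h := stdAddChar_coe (N := d) n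
  push_cast at h
  rw [h, omega, ← Complex.exp_nat_mul]
  ring_nf

lemma Zmat_pow (h : ℕ) :
    Zmat d ^ h = diagonal fun j : Fin d ↦ stdAddChar (N := d) ((j : ℕ) * h) := by
  rw [Zmat, diagonal_pow]
  congr with j
  rw [Pi.pow_apply, ← pow_mul, omega_pow]
  push_cast
  rfl

lemma sum_smul_Zmat_pow (v : ℕ → ℂ) :
    ∑ h ∈ range d, v h • Zmat d ^ h =
      diagonal fun j : Fin d ↦ ∑ h ∈ range d, v h * stdAddChar (N := d) ((j : ℕ) * h) := by
  ext i j
  rcases eq_or_ne i j with rfl | hij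
  · simp [Matrix.sum_apply, Zmat_pow]
  · simp [Matrix.sum_apply, Zmat_pow, hij]

lemma trace_conjTranspose_Zmat_pow_mul_Zmat_pow (a b : ℕ) :
    trace ((Zmat d ^ a)ᴴ * Zmat d ^ b) = if (a : ZMod d) = b then (d : ℂ) else 0 := by
  have hchar (x : ZMod d) :
      star (stdAddChar (N := d) (x * a)) * stdAddChar (N := d) (x * b) =
        stdAddChar (N := d) (x * (b - a)) := by
    rw [Complex.star_def, ← AddChar.map_neg_eq_conj, ← AddChar.map_add_eq_mul]
    ring_nf
  rw [Zmat_pow, Zmat_pow, diagonal_conjTranspose, diagonal_mul_diagonal, trace_diagonal]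
  simp only [Pi.star_apply, hchar]
  rw [Fin.sum_univ_eq_sum_range (fun n ↦ stdAddChar (N := d) (n * (b - a))),
    sum_range_eq_sum_zmod fun x ↦ stdAddChar (x * ((b : ZMod d) - (a : ZMod d))),
    AddChar.sum_mulShift _ (isPrimitive_stdAddChar d), ZMod.card]
  simp only [sub_eq_zero, eq_comm (a := (b : ZMod d)), apply_ite (Nat.cast : ℕ → ℂ), Nat.cast_zero]

lemma trace_conjTranspose_Zmat_pow_mul_sum {t : ℕ} (ht : t < d) (v : ℕ → ℂ) :
    trace ((Zmat d ^ t)ᴴ * ∑ h ∈ range d, v h • Zmat d ^ h) = d * v t := by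
  rw [Matrix.mul_sum, trace_sum]
  simp only [Matrix.mul_smul, trace_smul, trace_conjTranspose_Zmat_pow_mul_Zmat_pow, smul_eq_mul,
    mul_ite, mul_zero]
  rw [sum_eq_single_of_mem t (mem_range.mpr ht) fun h hh hne ↦ ?_, if_pos rfl, mul_comm]
  rw [if_neg (mt (natCast_inj_of_lt ht (mem_range.mp hh)).mp hne.symm)]

lemma trace_conjTranspose_sum_mul_sum (u v : ℕ → ℂ) :
    trace ((∑ h ∈ range d, u h • Zmat d ^ h)ᴴ * ∑ h ∈ range d, v h • Zmat d ^ h) =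
      d * ∑ h ∈ range d, conj (u h) * v h := by
  rw [conjTranspose_sum, sum_mul, trace_sum, mul_sum]
  refine sum_congr rfl fun h hh ↦ ?_
  rw [conjTranspose_smul, smul_mul, trace_smul,
    trace_conjTranspose_Zmat_pow_mul_sum (mem_range.mp hh), smul_eq_mul, Complex.star_def]
  ring

end PowersOfZ

section Bases

variable {d : ℕ}

lemma basOp_zero (t : ℕ) : basOp d 0 t = Zmat d ^ t := if_pos rfl

noncomputable def basCoeff (d : ℕ) [NeZero d] (k t h : ℕ) : ℂ :=
  (Real.sqrt d : ℂ)⁻¹ * stdAddChar (N := d) (-(t * h + k * alphaSum d h))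

variable [NeZero d]

lemma basOp_of_ne_zero {k : ℕ} (hk : k ≠ 0) (t : ℕ) :
    basOp d k t = ∑ h ∈ range d, basCoeff d k t h • Zmat d ^ h := by
  rw [basOp, if_neg hk]
  refine sum_congr rfl fun h hh ↦ ?_
  rw [basCoeff, omega_pow, omega_pow, ← AddChar.map_neg_eq_inv, one_div, mul_assoc,
    ← AddChar.map_add_eq_mul]
  push_cast [Nat.cast_sub (mem_range.mp hh).le, ZMod.natCast_self]
  ring_nf

lemma norm_basCoeff (k t h : ℕ) : ‖basCoeff d k t h‖ = (Real.sqrt d)⁻¹ := by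
  rw [basCoeff, norm_mul, AddChar.norm_apply, mul_one, norm_inv, Complex.norm_real,
    Real.norm_of_nonneg (Real.sqrt_nonneg _)]

lemma conj_basCoeff_mul_basCoeff (k t k' t' h : ℕ) :
    conj (basCoeff d k t h) * basCoeff d k' t' h =
      (d : ℂ)⁻¹ * stdAddChar (N := d) ((t - t') * h + (k - k') * alphaSum d h) := by
  rw [basCoeff, basCoeff, map_mul, map_inv₀, Complex.conj_ofReal, ← AddChar.map_neg_eq_conj,
    mul_mul_mul_comm, ← mul_inv, ← Complex.ofReal_mul,
    Real.mul_self_sqrt (Nat.cast_nonneg d), ← AddChar.map_add_eq_mul]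
  push_cast
  ring_nf

lemma trace_conjTranspose_basOp_mul_basOp {k k' : ℕ} (hk : k ≠ 0) (hk' : k' ≠ 0) (t t' : ℕ) :
    trace ((basOp d k t)ᴴ * basOp d k' t') =
      ∑ h ∈ range d, stdAddChar (N := d) ((t - t') * h + (k - k') * alphaSum d h) := by
  have hd : (d : ℂ) ≠ 0 := Nat.cast_ne_zero.mpr (NeZero.ne d)
  rw [basOp_of_ne_zero hk, basOp_of_ne_zero hk', trace_conjTranspose_sum_mul_sum, mul_sum]
  simp only [conj_basCoeff_mul_basCoeff, ← mul_assoc, mul_inv_cancel₀ hd, one_mul]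

lemma trace_conjTranspose_basOp_mul_basOp_self {t t' : ℕ} (htt' : (t : ZMod d) ≠ t') (k : ℕ) :
    trace ((basOp d k t)ᴴ * basOp d k t') = 0 := by
  rcases eq_or_ne k 0 with rfl | hk
  · rw [basOp_zero, basOp_zero, trace_conjTranspose_Zmat_pow_mul_Zmat_pow, if_neg htt']
  have hterm (h : ℕ) : stdAddChar (N := d) ((t - t') * h + (k - k) * alphaSum d h) =
      stdAddChar (N := d) (h * (t - t')) := by
    rw [sub_self, zero_mul, add_zero, mul_comm]
  rw [trace_conjTranspose_basOp_mul_basOp hk hk, sum_congr rfl fun h _ ↦ hterm h,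
    sum_range_eq_sum_zmod fun x ↦ stdAddChar (x * ((t : ZMod d) - (t' : ZMod d))),
    AddChar.sum_mulShift _ (isPrimitive_stdAddChar d), if_neg (sub_ne_zero.mpr htt'),
    Nat.cast_zero]

lemma norm_sq_trace_conjTranspose_basOp_zero_mul {k t : ℕ} (hk : k ≠ 0) (ht : t < d) (t' : ℕ) :
    ‖trace ((basOp d 0 t)ᴴ * basOp d k t')‖ ^ 2 = d := by
  rw [basOp_zero, basOp_of_ne_zero hk, trace_conjTranspose_Zmat_pow_mul_sum ht, norm_mul, mul_pow,
    norm_basCoeff, Complex.norm_natCast, inv_pow, Real.sq_sqrt (Nat.cast_nonneg _)]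
  field_simp

end Bases

section GaussSums

variable {d : ℕ} [Fact d.Prime]

lemma sum_range_stdAddChar_alphaSum (h2 : (2 : ZMod d) ≠ 0) (u v : ZMod d) :
    ∑ h ∈ range d, stdAddChar (N := d) (u * h + v * alphaSum d h) =
      ∑ x, stdAddChar (-(v / 2) * x ^ 2 + (u + v / 2) * x) := by
  rw [← sum_range_eq_sum_zmod]
  refine sum_congr rfl fun h hh ↦ congrArg _ ?_
  have hα := natCast_alphaSum_mul_two (d := d) (mem_range.mp hh).le
  field_simp
  linear_combination v * hα

lemma norm_sq_sum_range_stdAddChar_alphaSum (h2 : (2 : ZMod d) ≠ 0) (u : ZMod d) {v : ZMod d}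
    (hv : v ≠ 0) : ‖∑ h ∈ range d, stdAddChar (N := d) (u * h + v * alphaSum d h)‖ ^ 2 = d := by
  rw [sum_range_stdAddChar_alphaSum h2,
    AddChar.norm_sq_sum_quadratic (isPrimitive_stdAddChar d)
      (by rwa [mul_neg, mul_div_cancel₀ v h2, neg_ne_zero]),
    ZMod.card]

lemma basOp_mem_unitaryGroup (h2 : (2 : ZMod d) ≠ 0) {k : ℕ} (hk : k < d) (t : ℕ) :
    basOp d k t ∈ unitaryGroup (Fin d) ℂ := by
  rcases eq_or_ne k 0 with rfl | hk0
  · rw [basOp_zero, Zmat_pow]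
    exact diagonal_mem_unitaryGroup fun _ ↦ AddChar.norm_apply _ _
  rw [basOp_of_ne_zero hk0, sum_smul_Zmat_pow]
  refine diagonal_mem_unitaryGroup fun j ↦ ?_
  have hentry : ∑ h ∈ range d, basCoeff d k t h * stdAddChar (N := d) ((j : ℕ) * h) =
      (Real.sqrt d : ℂ)⁻¹ *
        ∑ h ∈ range d, stdAddChar (N := d) (((j : ℕ) - t) * h + -k * alphaSum d h) := by
    rw [mul_sum]
    refine sum_congr rfl fun h _ ↦ ?_
    rw [basCoeff, mul_assoc, ← AddChar.map_add_eq_mul]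
    ring_nf
  have hk' : -(k : ZMod d) ≠ 0 :=
    neg_ne_zero.mpr ((ZMod.natCast_eq_zero_iff k d).not.mpr (Nat.not_dvd_of_pos_of_lt
      (Nat.pos_of_ne_zero hk0) hk))
  have hsum := norm_sq_sum_range_stdAddChar_alphaSum h2 ((j : ℕ) - t) hk'
  rw [← pow_eq_one_iff_of_nonneg (norm_nonneg _) two_ne_zero, hentry, norm_mul, mul_pow, hsum,
    norm_inv, Complex.norm_real, Real.norm_of_nonneg (Real.sqrt_nonneg _), inv_pow,
    Real.sq_sqrt (Nat.cast_nonneg _)]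
  exact inv_mul_cancel₀ (Nat.cast_ne_zero.mpr (NeZero.ne d))

lemma norm_sq_trace_conjTranspose_basOp_mul_basOp (h2 : (2 : ZMod d) ≠ 0) {k k' t t' : ℕ}
    (hk : k < d) (hk' : k' < d) (hkk' : k ≠ k') (ht : t < d) (ht' : t' < d) :
    ‖trace ((basOp d k t)ᴴ * basOp d k' t')‖ ^ 2 = d := by
  rcases eq_or_ne k 0 with rfl | hk0
  · exact norm_sq_trace_conjTranspose_basOp_zero_mul hkk'.symm ht t'
  rcases eq_or_ne k' 0 with rfl | hk0'
  · rw [norm_trace_conjTranspose_mul_comm]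
    exact norm_sq_trace_conjTranspose_basOp_zero_mul hk0 ht' t
  rw [trace_conjTranspose_basOp_mul_basOp hk0 hk0']
  exact norm_sq_sum_range_stdAddChar_alphaSum h2 _
    (sub_ne_zero.mpr ((natCast_inj_of_lt hk hk').not.mpr hkk'))

end GaussSums

/-- For an odd prime `d`, the `d` bases `B_0 = {I, Z, …, Z^{d−1}}` and
`B_k = {Z_t^{(k)} : t = 0,…,d−1}` (`k = 1,…,d−1`) of `span{Z^0,…,Z^{d−1}}` consist of
unitaries, are orthogonal bases, and are pairwise mutually unbiased: for any two distinct
bases there is a nonzero constant `C` with `|Tr(A†B)|² = C` for all cross pairs. -/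
theorem d_muubs_for_subspace (d : ℕ) (hd : d.Prime) (hodd : Odd d) :
    (∀ k t : ℕ, k ≤ d - 1 → t ≤ d - 1 →
      basOp d k t ∈ Matrix.unitaryGroup (Fin d) ℂ) ∧
    (∀ k t t' : ℕ, k ≤ d - 1 → t ≤ d - 1 → t' ≤ d - 1 → t ≠ t' →
      Matrix.trace ((basOp d k t)ᴴ * basOp d k t') = 0) ∧
    (∀ k k' : ℕ, k ≤ d - 1 → k' ≤ d - 1 → k ≠ k' →
      ∃ C : ℝ, C ≠ 0 ∧ ∀ t t' : ℕ, t ≤ d - 1 → t' ≤ d - 1 →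
        ‖Matrix.trace ((basOp d k t)ᴴ * basOp d k' t')‖ ^ 2 = C) := by
  have : Fact d.Prime := ⟨hd⟩
  have h2 : (2 : ZMod d) ≠ 0 := by
    intro h
    have hd2 : d ∣ 2 := (ZMod.natCast_eq_zero_iff 2 d).mp (mod_cast h)
    rw [(Nat.prime_dvd_prime_iff_eq hd Nat.prime_two).mp hd2] at hodd
    exact Nat.not_odd_iff_even.mpr even_two hodd
  have hlt {n : ℕ} (hn : n ≤ d - 1) : n < d := by have := hd.pos; omega
  refine ⟨fun k t hk _ ↦ basOp_mem_unitaryGroup h2 (hlt hk) t,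
    fun k t t' _ ht ht' htt' ↦
      trace_conjTranspose_basOp_mul_basOp_self ((natCast_inj_of_lt (hlt ht) (hlt ht')).not.mpr htt') k,
    fun k k' hk hk' hkk' ↦ ⟨d, Nat.cast_ne_zero.mpr hd.ne_zero, fun t t' ht ht' ↦
      norm_sq_trace_conjTranspose_basOp_mul_basOp h2 (hlt hk) (hlt hk') hkk' (hlt ht) (hlt ht')⟩⟩
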